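/- Let {Aᵢ}_{i ∈ ℤ} be a family of ℤ-graded chain complexes of modules over the field 𝔽 = ℤ/2ℤ with differentials of degree −1, together with chain maps fᵢ : Aᵢ → A_{i+1} and degree-one module maps hᵢ : Aᵢ → A_{i+2} such that, for every i ∈ ℤ: (1) f_{i+1} ∘ fᵢ = ∂ ∘ hᵢ + hᵢ ∘ ∂; and (2) the chain map qᵢ := f_{i+2} ∘ hᵢ + h_{i+1} ∘ fᵢ : Aᵢ → A_{i+3} is a quasi-isomorphism. Then for every i ∈ ℤ and every degree n, the image of Hₙ(fᵢ) : Hₙ(Aᵢ) → Hₙ(A_{i+1}) equals the kernel of Hₙ(f_{i+1}) : Hₙ(A_{i+1}) → Hₙ(A_{i+2}); in particular the induced sequence of homology modules is exact at every term and the homology is three-periodic, with Hₙ(Aᵢ) ≅ Hₙ(A_{i+3}) induced by qᵢ. -/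
import Mathlib


/-- In a ℤ-graded chain complex `M` over `ℤ/2ℤ` with differential
`d n : M (n+1) → M n`, an element `x : M n` is a boundary if it lies in the
image of the differential. -/
def IsBoundary {M : ℤ → Type} [∀ n, AddCommGroup (M n)]
    [∀ n, Module (ZMod 2) (M n)]
    (d : ∀ n : ℤ, M (n + 1) →ₗ[ZMod 2] M n) (n : ℤ) (x : M n) : Prop :=
  ∃ w : M (n + 1), d n w = x

lemma char2_add_self {X : Type} [AddCommGroup X] [Module (ZMod 2) X] (a : X) :
    a + a = 0 := by
  have h2 : (2 : ZMod 2) = 0 := rfl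
  calc a + a = (2 : ZMod 2) • a := (two_smul _ a).symm
    _ = 0 := by rw [h2, zero_smul]

/-- **The exact triangle detection lemma** (ℤ-indexed version).
Let `{A i}_{i ∈ ℤ}` be a family of ℤ-graded chain complexes over `𝔽 = ℤ/2ℤ`
with degree `-1` differentials `d i`, chain maps `f i : A i → A (i+1)` and
degree `+1` module maps `h i : A i → A (i+2)` such that, for every `i`:
(1) `f_{i+1} ∘ f_i = ∂ ∘ h_i + h_i ∘ ∂`; and
(2) `q_i := f_{i+2} ∘ h_i + h_{i+1} ∘ f_i : A i → A (i+3)` (a degree `+1`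
chain map) is a quasi-isomorphism, stated element-wise as injectivity and
surjectivity on homology classes.  Then in every degree the image of the map
induced on homology by `f i` equals the kernel of the map induced by
`f (i+1)` — the induced sequence of homology modules is exact at every term —
and the homology is three-periodic, the isomorphism `Hₙ(A i) ≅ H(A (i+3))`
being induced by `q_i`. -/
theorem exact_triangle_detection_family
    (A : ℤ → ℤ → Type)
    [∀ i n, AddCommGroup (A i n)] [∀ i n, Module (ZMod 2) (A i n)]
    -- differentials, of degree -1
    (d : ∀ (i : ℤ) (n : ℤ), A i (n + 1) →ₗ[ZMod 2] A i n)
    (hd : ∀ i n, (d i n).comp (d i (n + 1)) = 0)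
    -- chain maps f i : A i → A (i+1)
    (f : ∀ (i : ℤ) (n : ℤ), A i n →ₗ[ZMod 2] A (i + 1) n)
    (hf : ∀ i n, (d (i + 1) n).comp (f i (n + 1)) = (f i n).comp (d i n))
    -- degree +1 homotopies h i : A i → A (i+2)
    (h : ∀ (i : ℤ) (n : ℤ), A i n →ₗ[ZMod 2] A (i + 1 + 1) (n + 1))
    -- (1) null-homotopy condition: f_{i+1} ∘ f_i = ∂ ∘ h_i + h_i ∘ ∂
    (hh : ∀ i n, (f (i + 1) (n + 1)).comp (f i (n + 1)) =
      (d (i + 1 + 1) (n + 1)).comp (h i (n + 1)) + (h i n).comp (d i n))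
    -- (2) each q_i = f_{i+2} ∘ h_i + h_{i+1} ∘ f_i : A i → A (i+3) is a
    -- quasi-isomorphism: injective on homology ...
    (hqinj : ∀ (i : ℤ) (n : ℤ) (x : A i (n + 1)), d i n x = 0 →
      IsBoundary (d (i + 1 + 1 + 1)) (n + 1 + 1)
        (((f (i + 1 + 1) (n + 1 + 1)).comp (h i (n + 1)) +
          (h (i + 1) (n + 1)).comp (f i (n + 1))) x) →
      IsBoundary (d i) (n + 1) x)
    -- ... and surjective on homology
    (hqsurj : ∀ (i : ℤ) (n : ℤ) (y : A (i + 1 + 1 + 1) (n + 1 + 1)),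
      d (i + 1 + 1 + 1) (n + 1) y = 0 →
      ∃ x : A i (n + 1), d i n x = 0 ∧
        IsBoundary (d (i + 1 + 1 + 1)) (n + 1 + 1)
          (y + ((f (i + 1 + 1) (n + 1 + 1)).comp (h i (n + 1)) +
            (h (i + 1) (n + 1)).comp (f i (n + 1))) x)) :
    -- Conclusions: exactness of the induced maps on homology at every term,
    -- image of H(f i) = kernel of H(f (i+1)) ...
    (∀ (i : ℤ) (n : ℤ) (x : A (i + 1) (n + 1)), d (i + 1) n x = 0 →
      (IsBoundary (d (i + 1 + 1)) (n + 1) (f (i + 1) (n + 1) x) ↔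
        ∃ y : A i (n + 1), d i n y = 0 ∧
          IsBoundary (d (i + 1)) (n + 1) (x + f i (n + 1) y))) ∧
    -- ... and three-periodicity of homology: q_i induces a bijection from the
    -- homology of A i onto the homology of A (i+3).
    (∀ (i : ℤ) (n : ℤ) (x : A i (n + 1)), d i n x = 0 →
      IsBoundary (d (i + 1 + 1 + 1)) (n + 1 + 1)
        (((f (i + 1 + 1) (n + 1 + 1)).comp (h i (n + 1)) +
          (h (i + 1) (n + 1)).comp (f i (n + 1))) x) →
      IsBoundary (d i) (n + 1) x) ∧
    (∀ (i : ℤ) (n : ℤ) (y : A (i + 1 + 1 + 1) (n + 1 + 1)),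
      d (i + 1 + 1 + 1) (n + 1) y = 0 →
      ∃ x : A i (n + 1), d i n x = 0 ∧
        IsBoundary (d (i + 1 + 1 + 1)) (n + 1 + 1)
          (y + ((f (i + 1 + 1) (n + 1 + 1)).comp (h i (n + 1)) +
            (h (i + 1) (n + 1)).comp (f i (n + 1))) x)) := by
  have hd' : ∀ (i n : ℤ) (w : A i (n + 1 + 1)), d i n (d i (n + 1) w) = 0 := by
    intro i n w
    simpa using LinearMap.congr_fun (hd i n) w
  have hf' : ∀ (i n : ℤ) (x : A i (n + 1)),
      d (i + 1) n (f i (n + 1) x) = f i n (d i n x) := by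
    intro i n x
    simpa using LinearMap.congr_fun (hf i n) x
  have hh' : ∀ (i n : ℤ) (x : A i (n + 1)),
      f (i + 1) (n + 1) (f i (n + 1) x) =
        d (i + 1 + 1) (n + 1) (h i (n + 1) x) + h i n (d i n x) := by
    intro i n x
    simpa using LinearMap.congr_fun (hh i n) x
  refine ⟨?_, hqinj, hqsurj⟩
  intro i n x hx
  constructor
  · -- image ⊆ kernel direction is the "backwards" iff direction; this is ⇒
    rintro ⟨z, hz⟩
    -- hz : d (i+1+1) (n+1) z = f (i+1) (n+1) x
    -- the cycle u = h_{i+1} x + f_{i+2} z in A (i+3)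
    set u : A (i + 1 + 1 + 1) (n + 1 + 1) :=
      h (i + 1) (n + 1) x + f (i + 1 + 1) (n + 1 + 1) z with hu_def
    have hu : d (i + 1 + 1 + 1) (n + 1) u = 0 := by
      have h1 : d (i + 1 + 1 + 1) (n + 1) (f (i + 1 + 1) (n + 1 + 1) z)
          = d (i + 1 + 1 + 1) (n + 1) (h (i + 1) (n + 1) x) := by
        rw [hf', hz, hh' (i + 1) n x, hx, map_zero, add_zero]
      rw [hu_def, map_add, h1]
      exact char2_add_self _
    obtain ⟨x', hx', w, hw⟩ := hqsurj i n u hu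
    simp only [LinearMap.add_apply, LinearMap.comp_apply] at hw
    refine ⟨x', hx', ?_⟩
    apply hqinj (i + 1) n (x + f i (n + 1) x')
    · rw [map_add, hx, hf', hx', map_zero, add_zero]
    · refine ⟨f (i + 1 + 1 + 1) (n + 1 + 1 + 1) w +
        h (i + 1 + 1) (n + 1 + 1) (h i (n + 1) x' + z), ?_⟩
      simp only [LinearMap.add_apply, LinearMap.comp_apply]
      rw [map_add, hf', hw, hu_def]
      simp only [map_add]
      rw [hh' (i + 1 + 1) (n + 1) z, hh' (i + 1 + 1) (n + 1) (h i (n + 1) x'),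
        hz, hh' i n x', hx', map_zero, add_zero]
      abel_nf
      simp [two_zsmul, two_nsmul, char2_add_self]
  · rintro ⟨y, hy, w, hw⟩
    -- hw : d (i+1) (n+1) w = x + f i (n+1) y
    refine ⟨h i (n + 1) y + f (i + 1) (n + 1 + 1) w, ?_⟩
    have hx_eq : x = d (i + 1) (n + 1) w + f i (n + 1) y := by
      rw [hw, add_assoc, char2_add_self, add_zero]
    rw [map_add, hf', hw]
    have e1 : d (i + 1 + 1) (n + 1) (h i (n + 1) y) = f (i + 1) (n + 1) (f i (n + 1) y) := by
      rw [hh' i n y, hy, map_zero, add_zero]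
    rw [e1, ← map_add]
    congr 1
    abel_nf
    simp [two_zsmul, two_nsmul, char2_add_self]
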